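/- arXiv:2211.06492 — 3 statements merged into one kernel-verified Lean document; each statement's English description precedes it below -/
import Mathlib

section
/- Let ℓ : ℝ → [0,∞) be convex and nonincreasing. Then for any a, b, c, d ∈ ℝ with a + b + c + d = 0 and s := (1/2)·max{|a+b|, |a+c|, |a+d|}: (ℓ(a)+ℓ(b)+ℓ(c)+ℓ(d))/4 ≥ (ℓ(s)+ℓ(−s))/2. -/
/-! Split `a, b, c, d` into the two pairs whose sums `±2s` have the largest modulus. Jensen's
inequality on each pair bounds `ℓ s + ℓ (-s)` by the average of `ℓ` over the two members of the
pair, so `ℓ s + ℓ (-s)` is at most half the sum of all four values. -/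

open Set

theorem ConvexOn.apply_smul_half_add_apply_neg_le {E : Type*} [AddCommGroup E] [Module ℝ E]
    {f : E → ℝ} (hf : ConvexOn ℝ univ f) {x y z w : E} (h : x + y + z + w = 0) :
    f ((2 : ℝ)⁻¹ • (x + y)) + f (-((2 : ℝ)⁻¹ • (x + y))) ≤ (f x + f y + f z + f w) / 2 := by
  have jensen : ∀ u v : E, f ((2 : ℝ)⁻¹ • (u + v)) ≤ (f u + f v) / 2 := fun u v => by
    have := hf.2 (mem_univ u) (mem_univ v) (by norm_num : (0 : ℝ) ≤ 2⁻¹)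
      (by norm_num : (0 : ℝ) ≤ 2⁻¹) (by norm_num)
    rw [← smul_add, smul_eq_mul, smul_eq_mul] at this
    linarith
  have hzw : z + w = -(x + y) := eq_neg_of_add_eq_zero_left (by rw [← h]; abel)
  have := jensen z w
  rw [hzw, smul_neg] at this
  linarith [jensen x y]

theorem apply_abs_add_apply_neg_abs (f : ℝ → ℝ) (u : ℝ) : f |u| + f (-|u|) = f u + f (-u) := by
  rcases abs_choice u with h | h <;> rw [h]
  · rw [neg_neg, add_comm]

theorem ConvexOn.apply_half_abs_add_apply_neg_le {f : ℝ → ℝ} (hf : ConvexOn ℝ univ f)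
    {x y z w : ℝ} (h : x + y + z + w = 0) :
    f (|x + y| / 2) + f (-(|x + y| / 2)) ≤ (f x + f y + f z + f w) / 2 := by
  have hhalf : |x + y| / 2 = |(2 : ℝ)⁻¹ • (x + y)| := by
    rw [smul_eq_mul, abs_mul, abs_of_pos (by norm_num : (0 : ℝ) < 2⁻¹), div_eq_inv_mul]
  rw [hhalf, apply_abs_add_apply_neg_abs]
  exact hf.apply_smul_half_add_apply_neg_le h

theorem stmt_9_general (ℓ : ℝ → ℝ) (hconv : ConvexOn ℝ Set.univ ℓ)
    (a b c d : ℝ) (hsum : a + b + c + d = 0)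
    (s : ℝ) (hs : s = (1/2) * max |a + b| (max |a + c| |a + d|)) :
    (ℓ s + ℓ (-s)) / 2 ≤ (ℓ a + ℓ b + ℓ c + ℓ d) / 4 := by
  have hs_cases : s = |a + b| / 2 ∨ s = |a + c| / 2 ∨ s = |a + d| / 2 := by
    rcases max_choice |a + b| (max |a + c| |a + d|) with h | h <;> rw [hs, h]
    · exact Or.inl (by ring)
    · rcases max_choice |a + c| |a + d| with h' | h' <;> rw [h']
      · exact Or.inr (Or.inl (by ring))
      · exact Or.inr (Or.inr (by ring))
  rcases hs_cases with rfl | rfl | rfl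
  · linarith [hconv.apply_half_abs_add_apply_neg_le hsum]
  · linarith [hconv.apply_half_abs_add_apply_neg_le (show a + c + b + d = 0 by linarith)]
  · linarith [hconv.apply_half_abs_add_apply_neg_le (show a + d + b + c = 0 by linarith)]

theorem stmt_9 (ℓ : ℝ → ℝ) (hconv : ConvexOn ℝ Set.univ ℓ) (hmono : Antitone ℓ)
    (hnn : ∀ x, 0 ≤ ℓ x) (a b c d : ℝ) (hsum : a + b + c + d = 0)
    (s : ℝ) (hs : s = (1/2) * max |a + b| (max |a + c| |a + d|)) :
    (ℓ s + ℓ (-s)) / 2 ≤ (ℓ a + ℓ b + ℓ c + ℓ d) / 4 :=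
  stmt_9_general ℓ hconv a b c d hsum s hs
end

section
/- Let ℓ : ℝ → [0,∞) be convex and nonincreasing, and let a, b, c, d ∈ ℝ with a + b + c + d = 0. Then (ℓ(a)+ℓ(b)+ℓ(c)+ℓ(d))/4 ≥ (ℓ(|a|/3) + ℓ(−|a|/3))/2. -/
/-!
Since `2a = (a + b) + (a + c) + (a + d)`, some partner `p ∈ {b, c, d}` satisfies
`|a| / 3 ≤ |a + p| / 2`. Midpoint convexity on the
pairs `{a, p}` and on the complementary pair, whose sum is `-(a + p)`, bounds the average of
`ℓ` by the average of `ℓ` at `±(a + p) / 2`. Finally `t ↦ ℓ t + ℓ (-t)` is convex and even,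
hence nondecreasing in `|t|`, which moves the point from `(a + p) / 2` down to `|a| / 3`.
-/

theorem ConvexOn.add_comp_neg_le {f : ℝ → ℝ} (hf : ConvexOn ℝ Set.univ f) {u v : ℝ}
    (h : |u| ≤ |v|) : f u + f (-u) ≤ f v + f (-v) := by
  have hg : ConvexOn ℝ Set.univ (fun x ↦ f x + f (-x)) :=
    hf.add (hf.comp_linearMap (-LinearMap.id))
  have hu : u ∈ segment ℝ (-|v|) |v| := by
    rw [segment_eq_uIcc, Set.uIcc_of_le (neg_le_self (abs_nonneg v))]
    exact abs_le.mp h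
  have key := hg.le_on_segment (Set.mem_univ _) (Set.mem_univ _) hu
  rcases abs_choice v with hv | hv <;> simpa [hv, add_comm] using key

theorem ConvexOn.map_add_div_two_le {f : ℝ → ℝ} (hf : ConvexOn ℝ Set.univ f) (x y : ℝ) :
    f ((x + y) / 2) ≤ (f x + f y) / 2 := by
  have h := hf.2 (Set.mem_univ x) (Set.mem_univ y) (by norm_num : (0:ℝ) ≤ 1/2)
    (by norm_num : (0:ℝ) ≤ 1/2) (by norm_num)
  simp only [smul_eq_mul] at h
  rw [← mul_add, one_div_mul_eq_div] at h
  linarith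

theorem ConvexOn.map_half_add_map_neg_half_le {f : ℝ → ℝ} (hf : ConvexOn ℝ Set.univ f)
    {x y z w : ℝ} (hsum : x + y + z + w = 0) :
    f ((x + y) / 2) + f (-((x + y) / 2)) ≤ (f x + f y + f z + f w) / 2 := by
  have hzw : (z + w) / 2 = -((x + y) / 2) := by linarith
  have hxy := hf.map_add_div_two_le x y
  have hzw' := hf.map_add_div_two_le z w
  rw [hzw] at hzw'
  linarith

theorem abs_div_three_le_of_add_eq_zero {a b c d : ℝ} (hsum : a + b + c + d = 0) :
    |a| / 3 ≤ |(a + b) / 2| ∨ |a| / 3 ≤ |(a + c) / 2| ∨ |a| / 3 ≤ |(a + d) / 2| := by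
  by_contra! h
  have htri := abs_add_three (a + b) (a + c) (a + d)
  rw [show a + b + (a + c) + (a + d) = 2 * a by linarith, abs_mul, abs_two] at htri
  simp only [abs_div, abs_two] at h
  linarith [h.1, h.2.1, h.2.2]

theorem stmt_11_general (ℓ : ℝ → ℝ) (hconv : ConvexOn ℝ Set.univ ℓ)
    (a b c d : ℝ) (hsum : a + b + c + d = 0) :
    (ℓ (|a| / 3) + ℓ (-(|a| / 3))) / 2 ≤ (ℓ a + ℓ b + ℓ c + ℓ d) / 4 := by
  have habs : |(|a| / 3)| = |a| / 3 := abs_of_nonneg (by positivity)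
  rcases abs_div_three_le_of_add_eq_zero hsum with h | h | h
  · have := hconv.add_comp_neg_le (habs.trans_le h)
    linarith [hconv.map_half_add_map_neg_half_le hsum]
  · have := hconv.add_comp_neg_le (habs.trans_le h)
    linarith [hconv.map_half_add_map_neg_half_le (x := a) (y := c) (z := b) (w := d) (by linarith)]
  · have := hconv.add_comp_neg_le (habs.trans_le h)
    linarith [hconv.map_half_add_map_neg_half_le (x := a) (y := d) (z := b) (w := c) (by linarith)]

theorem stmt_11 (ℓ : ℝ → ℝ) (hconv : ConvexOn ℝ Set.univ ℓ) (hmono : Antitone ℓ)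
    (hnn : ∀ x, 0 ≤ ℓ x) (a b c d : ℝ) (hsum : a + b + c + d = 0) :
    (ℓ (|a| / 3) + ℓ (-(|a| / 3))) / 2 ≤ (ℓ a + ℓ b + ℓ c + ℓ d) / 4 :=
  stmt_11_general ℓ hconv a b c d hsum
end

section
/- Let W, V be n-qubit unitaries of product form W = W₁⊗⋯⊗Wₙ, V = V₁⊗⋯⊗Vₙ, let U = U₁⊗⋯⊗Uₙ be a product of single-qubit unitaries, U' = U₁⊗I⊗⋯⊗I, V' = V₁⊗I⊗⋯⊗I, and let M₁ = [[0,0],[0,1]]⊗I_{2^{n-1}}. Then for every unit vector ψ ∈ ℂ^{2^n}: ⟨ψ| V†W†U† M₁ UWV |ψ⟩ = ⟨ψ| V'†W†U'† M₁ U'WV' |ψ⟩. -/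
open Matrix

/-- Kronecker (tensor) product of `n` single-qubit (2×2) matrices, acting on
`(Fin n → Fin 2)`-indexed coordinates. -/
def tensorN (n : ℕ) (Us : Fin n → Matrix (Fin 2) (Fin 2) ℂ) :
    Matrix (Fin n → Fin 2) (Fin n → Fin 2) ℂ :=
  Matrix.of fun f g => ∏ i, Us i (f i) (g i)

/-- The measurement operator `M₁ = |1⟩⟨1| ⊗ I`. -/
def Mproj (n : ℕ) : Matrix (Fin (n+1) → Fin 2) (Fin (n+1) → Fin 2) ℂ :=
  Matrix.of fun f g => if f = g ∧ f 0 = 1 then 1 else 0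

/-! Every operator involved is a Kronecker product, so both sandwiched observables factor qubit by
qubit. The factor on qubit 1 is the same on both sides, and on every other qubit it is `Xᴴ * 1 * X = 1`
for a unitary `X`, whatever the noise there. -/

lemma tensorN_mul (n : ℕ) (A B : Fin n → Matrix (Fin 2) (Fin 2) ℂ) :
    tensorN n A * tensorN n B = tensorN n (fun i => A i * B i) := by
  ext f g
  simp only [tensorN, mul_apply, of_apply, Finset.prod_mul_distrib, Finset.prod_univ_sum,
    Fintype.piFinset_univ]

lemma conjTranspose_tensorN (n : ℕ) (A : Fin n → Matrix (Fin 2) (Fin 2) ℂ) :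
    (tensorN n A)ᴴ = tensorN n (fun i => (A i)ᴴ) := by
  ext f g
  simp [tensorN, conjTranspose_apply]

lemma conjTranspose_tensorN_mul_tensorN_mul_tensorN (n : ℕ)
    (A B : Fin n → Matrix (Fin 2) (Fin 2) ℂ) :
    (tensorN n A)ᴴ * tensorN n B * tensorN n A = tensorN n (fun i => (A i)ᴴ * B i * A i) := by
  rw [conjTranspose_tensorN, tensorN_mul, tensorN_mul]

lemma Mproj_eq_tensorN (n : ℕ) :
    Mproj n = tensorN (n+1) (fun i => if i = 0 then single 1 1 1 else 1) := by
  ext f g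
  simp only [Mproj, tensorN, of_apply, Fin.prod_univ_succ, if_pos, Fin.succ_ne_zero, if_false,
    single_apply, one_apply, Finset.prod_boole, funext_iff, Fin.forall_fin_succ]
  aesop

lemma conjTranspose_mul_conjTranspose_mul_conjTranspose_mul {m α : Type*} [Fintype m]
    [CommSemiring α] [StarRing α] (A B C M : Matrix m m α) :
    Cᴴ * Bᴴ * Aᴴ * M * A * B * C = (A * B * C)ᴴ * M * (A * B * C) := by
  simp only [conjTranspose_mul, Matrix.mul_assoc]

theorem stmt_19_general (n : ℕ)
    (Us Ws Vs : Fin (n+1) → Matrix (Fin 2) (Fin 2) ℂ)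
    (hUs : ∀ i, Us i ∈ Matrix.unitaryGroup (Fin 2) ℂ)
    (hWs : ∀ i, Ws i ∈ Matrix.unitaryGroup (Fin 2) ℂ)
    (hVs : ∀ i, Vs i ∈ Matrix.unitaryGroup (Fin 2) ℂ)
    (U W V U' V' : Matrix (Fin (n+1) → Fin 2) (Fin (n+1) → Fin 2) ℂ)
    (hU : U = tensorN (n+1) Us) (hW : W = tensorN (n+1) Ws)
    (hV : V = tensorN (n+1) Vs)
    (hU' : U' = tensorN (n+1) (fun i => if i = 0 then Us 0 else 1))
    (hV' : V' = tensorN (n+1) (fun i => if i = 0 then Vs 0 else 1))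
    (ψ : (Fin (n+1) → Fin 2) → ℂ) :
    star ψ ⬝ᵥ ((Vᴴ * Wᴴ * Uᴴ * Mproj n * U * W * V) *ᵥ ψ)
      = star ψ ⬝ᵥ ((V'ᴴ * Wᴴ * U'ᴴ * Mproj n * U' * W * V') *ᵥ ψ) := by
  subst hU hW hV hU' hV'
  simp only [conjTranspose_mul_conjTranspose_mul_conjTranspose_mul, tensorN_mul, Mproj_eq_tensorN,
    conjTranspose_tensorN_mul_tensorN_mul_tensorN]
  refine congrArg (fun M => star ψ ⬝ᵥ tensorN (n+1) M *ᵥ ψ) (funext fun i => ?_)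
  by_cases hi : i = 0
  · simp only [hi, if_true]
  · simp only [if_neg hi, Matrix.mul_one, Matrix.one_mul, ← star_eq_conjTranspose]
    rw [Unitary.star_mul_self_of_mem (hWs i),
      Unitary.star_mul_self_of_mem (mul_mem (mul_mem (hUs i) (hWs i)) (hVs i))]

theorem stmt_19 (n : ℕ)
    (Us Ws Vs : Fin (n+1) → Matrix (Fin 2) (Fin 2) ℂ)
    (hUs : ∀ i, Us i ∈ Matrix.unitaryGroup (Fin 2) ℂ)
    (hWs : ∀ i, Ws i ∈ Matrix.unitaryGroup (Fin 2) ℂ)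
    (hVs : ∀ i, Vs i ∈ Matrix.unitaryGroup (Fin 2) ℂ)
    (U W V U' V' : Matrix (Fin (n+1) → Fin 2) (Fin (n+1) → Fin 2) ℂ)
    (hU : U = tensorN (n+1) Us) (hW : W = tensorN (n+1) Ws)
    (hV : V = tensorN (n+1) Vs)
    (hU' : U' = tensorN (n+1) (fun i => if i = 0 then Us 0 else 1))
    (hV' : V' = tensorN (n+1) (fun i => if i = 0 then Vs 0 else 1))
    (ψ : (Fin (n+1) → Fin 2) → ℂ) (hψ : star ψ ⬝ᵥ ψ = 1) :
    star ψ ⬝ᵥ ((Vᴴ * Wᴴ * Uᴴ * Mproj n * U * W * V) *ᵥ ψ)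
      = star ψ ⬝ᵥ ((V'ᴴ * Wᴴ * U'ᴴ * Mproj n * U' * W * V') *ᵥ ψ) :=
  stmt_19_general n Us Ws Vs hUs hWs hVs U W V U' V' hU hW hV hU' hV' ψ
end
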